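/- arXiv:1908.01306 — 4 statements merged into one kernel-verified Lean document; each statement's English description precedes it below -/
import Mathlib

section
/- For every complex number w with |w| = R where 0 ≤ R < 1, one has cos R ≤ |cos w| ≤ cosh R. -/
lemma aux_sq (x y : ℝ) :
    ‖Complex.cos (x + y * Complex.I)‖ ^ 2 =
      Real.cos x ^ 2 + Real.sinh y ^ 2 := by
  have h : Complex.cos (x + y * Complex.I)
      = (Real.cos x * Real.cosh y : ℝ) + (-(Real.sin x * Real.sinh y) : ℝ) * Complex.I := by
    rw [Complex.cos_add, Complex.cos_mul_I, Complex.sin_mul_I]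
    push_cast
    ring
  rw [h, ← Complex.normSq_eq_norm_sq, Complex.normSq_add_mul_I]
  nlinarith [Real.sin_sq_add_cos_sq x, Real.cosh_sq y]

theorem stmt_0 (w : ℂ) (R : ℝ) (hR0 : 0 ≤ R) (hR1 : R < 1)
    (hw : ‖w‖ = R) :
    Real.cos R ≤ ‖Complex.cos w‖ ∧
    ‖Complex.cos w‖ ≤ Real.cosh R := by
  obtain ⟨x, y, rfl⟩ : ∃ x y : ℝ, w = x + y * Complex.I := ⟨w.re, w.im, by simp⟩
  have hx : |x| ≤ R := by
    have := Complex.abs_re_le_norm (x + y * Complex.I); simpa [hw] using this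
  have hy : |y| ≤ R := by
    have := Complex.abs_im_le_norm (x + y * Complex.I); simpa [hw] using this
  have hsq := aux_sq x y
  have hA : 0 ≤ ‖Complex.cos (x + y * Complex.I)‖ := norm_nonneg _
  have hpi : R ≤ Real.pi / 2 := hR1.le.trans (by linarith [Real.pi_gt_three])
  have hcosR : 0 ≤ Real.cos R :=
    Real.cos_nonneg_of_mem_Icc ⟨by linarith, hpi⟩
  constructor
  · have h1 : Real.cos R ≤ Real.cos |x| :=
      Real.cos_le_cos_of_nonneg_of_le_pi (abs_nonneg x) (by linarith [Real.pi_gt_three]) hx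
    have h2 : Real.cos |x| ≤ |Real.cos x| := by
      rcases abs_choice x with h | h <;> rw [h] <;> simp [le_abs_self, neg_abs_le]
    have h3 : Real.cos R ^ 2 ≤ Real.cos x ^ 2 := by
      have := sq_abs (Real.cos x)
      nlinarith
    nlinarith
  · have h1 : Real.cosh y ≤ Real.cosh R := by
      rw [← Real.cosh_abs, ← Real.cosh_abs R]; exact Real.cosh_le_cosh.2 (by simpa [abs_of_nonneg hR0] using hy)
    have hcy : (0:ℝ) < Real.cosh y := Real.cosh_pos y
    have h2 : ‖Complex.cos (x + y * Complex.I)‖ ^ 2 ≤ Real.cosh R ^ 2 := by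
      rw [hsq]
      nlinarith [Real.cosh_sq y, Real.sin_sq_add_cos_sq x, Real.cosh_pos R]
    nlinarith [Real.cosh_pos R]
end

section
/- The equation (1 - r²)·cos r = 2r has a unique solution r₁ in (0, 1), and 0.39 < r₁ < 0.392. -/
open Real Set

namespace CosEquation

noncomputable def k (r : ℝ) : ℝ := (1 - r ^ 2) * cos r - 2 * r

theorem continuous_k : Continuous k := by
  unfold k
  fun_prop

theorem strictAntiOn_k : StrictAntiOn k (Icc 0 1) := by
  rintro a ⟨ha0, ha1⟩ b ⟨hb0, hb1⟩ hab
  have hcos_a : 0 < cos a := cos_pos_of_mem_Ioo ⟨by linarith [pi_gt_three], by linarith [pi_gt_three]⟩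
  have hcos_b : 0 ≤ cos b := cos_nonneg_of_mem_Icc ⟨by linarith [pi_gt_three], by linarith [pi_gt_three]⟩
  have hcos_le : cos b ≤ cos a := cos_le_cos_of_nonneg_of_le_pi ha0 (by linarith [pi_gt_three]) hab.le
  have hfac_b : 0 ≤ 1 - b ^ 2 := by nlinarith
  have hfac_lt : 1 - b ^ 2 < 1 - a ^ 2 := by nlinarith
  have hprod : (1 - b ^ 2) * cos b < (1 - a ^ 2) * cos a :=
    calc (1 - b ^ 2) * cos b ≤ (1 - b ^ 2) * cos a := mul_le_mul_of_nonneg_left hcos_le hfac_b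
      _ < (1 - a ^ 2) * cos a := mul_lt_mul_of_pos_right hfac_lt hcos_a
  unfold k
  linarith

theorem k_039_pos : 0 < k 0.39 := by
  have h := abs_le.1 (cos_bound (x := 0.39) (by norm_num [abs_of_pos]))
  rw [abs_of_pos (by norm_num)] at h
  unfold k
  nlinarith [h.1]

theorem k_0392_neg : k 0.392 < 0 := by
  have h := abs_le.1 (cos_bound (x := 0.392) (by norm_num [abs_of_pos]))
  rw [abs_of_pos (by norm_num)] at h
  unfold k
  nlinarith [h.2]

end CosEquation

open CosEquation in
theorem stmt_5 :
    ∃ r₁ : ℝ, (r₁ ∈ Set.Ioo (0 : ℝ) 1 ∧ (1 - r₁ ^ 2) * Real.cos r₁ = 2 * r₁) ∧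
      (∀ r ∈ Set.Ioo (0 : ℝ) 1, (1 - r ^ 2) * Real.cos r = 2 * r → r = r₁) ∧
      0.39 < r₁ ∧ r₁ < 0.392 := by
  have k_eq_zero_iff (r : ℝ) : k r = 0 ↔ (1 - r ^ 2) * cos r = 2 * r := sub_eq_zero
  obtain ⟨r₁, ⟨h39, h392⟩, hr₁⟩ : (0 : ℝ) ∈ k '' Ioo 0.39 0.392 :=
    intermediate_value_Ioo' (by norm_num) continuous_k.continuousOn ⟨k_0392_neg, k_039_pos⟩
  refine ⟨r₁, ⟨⟨by linarith, by linarith⟩, (k_eq_zero_iff r₁).1 hr₁⟩, ?_, h39, h392⟩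
  intro r hr hroot
  exact strictAntiOn_k.injOn (Ioo_subset_Icc_self hr) ⟨by linarith, by linarith⟩
    (((k_eq_zero_iff r).2 hroot).trans hr₁.symm)
end

section
/- Fix r ∈ (0, 1) with (1 - r²)·cos r - 2r ≥ 0. Then for every β ∈ [0, 1], one has β + ((1 - β²)/(1 - r²))·(r / cos r) ≤ 1. -/
theorem add_mul_one_sub_sq_le_one {β t : ℝ} (hβ : β ∈ Set.Icc (-1 : ℝ) 1) (ht : 2 * t ≤ 1) :
    β + (1 - β ^ 2) * t ≤ 1 := by
  obtain ⟨hβ_ge, hβ_le⟩ := hβ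
  have hfactor : (1 + β) * t ≤ 1 := by
    have hhalf : 0 ≤ (1 + β) * (1 / 2 - t) := mul_nonneg (by linarith) (by linarith)
    linarith [hhalf]
  have hprod : 0 ≤ (1 - β) * (1 - (1 + β) * t) := mul_nonneg (by linarith) (by linarith)
  linarith [hprod]

theorem stmt_6 (r : ℝ) (hr : r ∈ Set.Ioo (0 : ℝ) 1)
    (hk : (1 - r ^ 2) * Real.cos r - 2 * r ≥ 0) :
    ∀ β ∈ Set.Icc (0 : ℝ) 1,
      β + (1 - β ^ 2) / (1 - r ^ 2) * (r / Real.cos r) ≤ 1 := by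
  intro β hβ
  have hdom : 2 * r ≤ (1 - r ^ 2) * Real.cos r := by linarith
  have hpos : 0 < (1 - r ^ 2) * Real.cos r := by linarith [hr.1]
  rw [div_mul_div_comm, mul_div_assoc]
  refine add_mul_one_sub_sq_le_one ⟨by linarith [hβ.1], hβ.2⟩ ?_
  rwa [← mul_div_assoc, div_le_one hpos]
end

section
/- Let f and g be analytic on the unit disc Δ with f(0) = g(0) = 0, f'(0) = g'(0) = 1, and assume: (i) f = ψ·g for some analytic ψ with |ψ| ≤ 1 on Δ (f is majorized by g); (ii) there is an analytic φ : Δ → Δ with φ(0) = 0 and z·g'(z) = g(z)·cos(φ(z)) on Δ. Then |f'(z)| ≤ |g'(z)| for all z with |z| ≤ r₁, where r₁ is the smallest positive root of (1 - r²)·cos r - 2r = 0. -/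
lemma blaschke_aux (a w : ℂ) : Complex.normSq (w - a) + (1 - Complex.normSq a) * (1 - Complex.normSq w) = Complex.normSq (1 - (starRingEnd ℂ) a * w) := by
  simp [Complex.normSq_apply, Complex.mul_re, Complex.mul_im, Complex.sub_re, Complex.sub_im]
  ring

lemma cos_lb {w : ℂ} {r : ℝ} (hw : ‖w‖ ≤ r) (hr : r ≤ 1) :
    Real.cos r ≤ ‖Complex.cos w‖ := by
  have hre : (Complex.cos w).re = Real.cos w.re * Real.cosh w.im := by
    rw [Complex.cos_eq]
    simp [Complex.mul_re, Complex.mul_im, Complex.cos_ofReal_re, Complex.sin_ofReal_re,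
      Complex.cosh_ofReal_re, Complex.sinh_ofReal_re]
  have hr0 : 0 ≤ r := (norm_nonneg w).trans hw
  have h1 : |w.re| ≤ r := (Complex.abs_re_le_norm w).trans hw
  have hcr : Real.cos r ≤ Real.cos |w.re| := by
    apply Real.cos_le_cos_of_nonneg_of_le_pi (abs_nonneg _) (by linarith [Real.pi_gt_three]) h1
  have hcnn : 0 ≤ Real.cos r := Real.cos_nonneg_of_mem_Icc ⟨by linarith [Real.pi_gt_three],
    by linarith [Real.pi_gt_three]⟩
  calc Real.cos r ≤ Real.cos w.re * Real.cosh w.im := by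
        rw [← Real.cos_abs w.re] at *
        nlinarith [Real.one_le_cosh w.im, hcr]
    _ ≤ |(Complex.cos w).re| := by rw [hre]; exact le_abs_self _
    _ ≤ ‖Complex.cos w‖ := Complex.abs_re_le_norm _

open Metric in
lemma schwarz_pick {ψ : ℂ → ℂ} (hψ : DifferentiableOn ℂ ψ (ball 0 1))
    (hb : ∀ z ∈ ball (0:ℂ) 1, ‖ψ z‖ < 1) {a : ℂ} (ha : a ∈ ball (0:ℂ) 1) :
    ‖deriv ψ a‖ * (1 - ‖a‖ ^ 2) ≤ 1 - ‖ψ a‖ ^ 2 := by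
  set w₀ := ψ a with hw₀
  have haa : ‖a‖ < 1 := by simpa using ha
  have hw0 : ‖w₀‖ < 1 := hb a ha
  set m : ℂ → ℂ := fun z => (z + a) / (1 + (starRingEnd ℂ) a * z) with hm
  set B : ℂ → ℂ := fun w => (w - w₀) / (1 - (starRingEnd ℂ) w₀ * w) with hB
  -- denominators nonzero
  have hden_m : ∀ z ∈ ball (0:ℂ) 1, (1 + (starRingEnd ℂ) a * z) ≠ 0 := by
    intro z hz
    have hz1 : ‖z‖ < 1 := by simpa using hz
    intro h
    have : ‖(starRingEnd ℂ) a * z‖ = 1 := by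
      have : (starRingEnd ℂ) a * z = -1 := by linear_combination h
      rw [this]; simp
    rw [norm_mul] at this
    simp only [Complex.norm_conj] at this
    nlinarith [norm_nonneg a, norm_nonneg z]
  have hden_B : ∀ w : ℂ, ‖w‖ ≤ 1 → (1 - (starRingEnd ℂ) w₀ * w) ≠ 0 := by
    intro w hw h
    have : ‖(starRingEnd ℂ) w₀ * w‖ = 1 := by
      have : (starRingEnd ℂ) w₀ * w = 1 := by linear_combination -h
      rw [this]; simp
    rw [norm_mul] at this
    simp only [Complex.norm_conj] at this
    nlinarith [norm_nonneg w₀, norm_nonneg w]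
  -- m maps ball to ball
  have hmaps_m : Set.MapsTo m (ball (0:ℂ) 1) (ball (0:ℂ) 1) := by
    intro z hz
    have hz1 : ‖z‖ < 1 := by simpa using hz
    have hden := hden_m z hz
    have key := blaschke_aux (-a) z
    simp only [Complex.normSq_neg, sub_neg_eq_add, map_neg, neg_mul, sub_neg_eq_add] at key
    have h1 : Complex.normSq (z + a) < Complex.normSq (1 + (starRingEnd ℂ) a * z) := by
      have hpos : 0 < (1 - Complex.normSq a) * (1 - Complex.normSq z) := by
        apply mul_pos <;> · rw [← Complex.sq_norm]; nlinarith [norm_nonneg a, norm_nonneg z]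
      nlinarith [key]
    simp only [mem_ball, dist_zero_right, hm]
    rw [norm_div, div_lt_one (norm_pos_iff.mpr hden)]
    have := Complex.sq_norm (z + a)
    have := Complex.sq_norm (1 + (starRingEnd ℂ) a * z)
    nlinarith [norm_nonneg (z + a), norm_nonneg (1 + (starRingEnd ℂ) a * z)]
  -- B maps ball to ball
  have hmaps_B : Set.MapsTo B (ball (0:ℂ) 1) (ball (0:ℂ) 1) := by
    intro w hw
    have hw1 : ‖w‖ < 1 := by simpa using hw
    have hden := hden_B w hw1.le
    have key := blaschke_aux w₀ w
    have h1 : Complex.normSq (w - w₀) < Complex.normSq (1 - (starRingEnd ℂ) w₀ * w) := by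
      have hpos : 0 < (1 - Complex.normSq w₀) * (1 - Complex.normSq w) := by
        apply mul_pos <;> · rw [← Complex.sq_norm]; nlinarith [norm_nonneg w₀, norm_nonneg w]
      nlinarith [key]
    simp only [mem_ball, dist_zero_right, hB]
    rw [norm_div, div_lt_one (norm_pos_iff.mpr hden)]
    have := Complex.sq_norm (w - w₀)
    have := Complex.sq_norm (1 - (starRingEnd ℂ) w₀ * w)
    nlinarith [norm_nonneg (w - w₀), norm_nonneg (1 - (starRingEnd ℂ) w₀ * w)]
  -- differentiability
  have hdm : DifferentiableOn ℂ m (ball (0:ℂ) 1) := by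
    apply DifferentiableOn.div
    · exact (differentiable_id.add_const a).differentiableOn
    · exact ((differentiable_const _).mul differentiable_id).const_add 1 |>.differentiableOn
    · exact hden_m
  have hdB : DifferentiableOn ℂ B (ball (0:ℂ) 1) := by
    apply DifferentiableOn.div
    · exact (differentiable_id.sub_const w₀).differentiableOn
    · exact Differentiable.differentiableOn
        ((differentiable_const (1:ℂ)).sub ((differentiable_const _).mul differentiable_id))
    · intro w hw
      have hw1 : ‖w‖ < 1 := by simpa using hw
      exact hden_B w hw1.le
  have hm0 : m 0 = a := by simp [hm]
  have hψm : Set.MapsTo (ψ ∘ m) (ball (0:ℂ) 1) (ball (0:ℂ) 1) := fun z hz => by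
    simpa using hb _ (hmaps_m hz)
  have hh : DifferentiableOn ℂ (B ∘ ψ ∘ m) (ball (0:ℂ) 1) :=
    (hdB.comp (hψ.comp hdm hmaps_m) hψm)
  have hh0 : (B ∘ ψ ∘ m) 0 = 0 := by simp [hm0, hB, hw₀]
  have hmaps_h : Set.MapsTo (B ∘ ψ ∘ m) (ball (0:ℂ) 1) (ball (0:ℂ) 1) :=
    hmaps_B.comp hψm
  have hschwarz : ‖deriv (B ∘ ψ ∘ m) 0‖ ≤ 1 :=
    Complex.norm_deriv_le_one_of_mapsTo_ball hh (by rw [hh0]; exact hmaps_h.mono_right ball_subset_closedBall) one_pos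
  -- differentiability at points
  have h0ball : (0:ℂ) ∈ ball (0:ℂ) 1 := by simp
  have hdm0 : DifferentiableAt ℂ m 0 := hdm.differentiableAt (isOpen_ball.mem_nhds h0ball)
  have hdψa : DifferentiableAt ℂ ψ a := hψ.differentiableAt (isOpen_ball.mem_nhds ha)
  have hwball : w₀ ∈ ball (0:ℂ) 1 := by simpa using hw0
  have hdBw : DifferentiableAt ℂ B w₀ := hdB.differentiableAt (isOpen_ball.mem_nhds hwball)
  -- chain rule
  have hdψa' : DifferentiableAt ℂ ψ (m 0) := by rwa [hm0]
  have hdψm0 : DifferentiableAt ℂ (ψ ∘ m) 0 := hdψa'.comp 0 hdm0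
  have hdBw' : DifferentiableAt ℂ B ((ψ ∘ m) 0) := by
    simpa [Function.comp, hm0] using hdBw
  have hchain : deriv (B ∘ ψ ∘ m) 0 = deriv B w₀ * (deriv ψ a * deriv m 0) := by
    rw [deriv_comp 0 hdBw' hdψm0, deriv_comp 0 hdψa' hdm0, hm0]
    simp [Function.comp, hm0, hw₀]
  -- compute deriv m 0
  have hdm0v : deriv m 0 = 1 - (Complex.normSq a : ℂ) := by
    have hc : HasDerivAt (fun z : ℂ => z + a) 1 0 := by
      simpa using (hasDerivAt_id (0:ℂ)).add_const a
    have hd : HasDerivAt (fun z : ℂ => 1 + (starRingEnd ℂ) a * z) ((starRingEnd ℂ) a) 0 := by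
      simpa using ((hasDerivAt_id (0:ℂ)).const_mul ((starRingEnd ℂ) a)).const_add 1
    have hq := hc.fun_div hd (by simpa using hden_m 0 h0ball)
    rw [hm, hq.deriv]
    have h : a * (starRingEnd ℂ) a = (Complex.normSq a : ℂ) := Complex.mul_conj a
    simp only [mul_zero, add_zero, zero_add, one_pow, div_one, one_mul]
    linear_combination -h
  -- compute deriv B w₀
  have hnw : ((1:ℂ) - (Complex.normSq w₀ : ℂ)) ≠ 0 := by
    intro h
    have h2 : 1 - Complex.normSq w₀ = 0 := by simpa using congrArg Complex.re h
    rw [← Complex.sq_norm] at h2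
    nlinarith [norm_nonneg w₀]
  have hdBwv : deriv B w₀ = ((1:ℂ) - (Complex.normSq w₀ : ℂ))⁻¹ := by
    have hden : (1 - (starRingEnd ℂ) w₀ * w₀) ≠ 0 := hden_B w₀ hw0.le
    have hc : HasDerivAt (fun w : ℂ => w - w₀) 1 w₀ := by
      simpa using (hasDerivAt_id w₀).sub_const w₀
    have hd : HasDerivAt (fun w : ℂ => 1 - (starRingEnd ℂ) w₀ * w) (-((starRingEnd ℂ) w₀)) w₀ := by
      simpa using ((hasDerivAt_id w₀).const_mul ((starRingEnd ℂ) w₀)).const_sub 1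
    have hq := hc.fun_div hd hden
    rw [hB, hq.deriv]
    have hcj : (starRingEnd ℂ) w₀ * w₀ = (Complex.normSq w₀ : ℂ) := by
      rw [mul_comm]; exact Complex.mul_conj w₀
    rw [hcj]
    field_simp
    ring
  rw [hchain, hdBwv, hdm0v] at hschwarz
  rw [norm_mul, norm_mul, norm_inv] at hschwarz
  have e1 : ‖(1:ℂ) - (Complex.normSq w₀ : ℂ)‖ = 1 - ‖w₀‖ ^ 2 := by
    rw [show ((1:ℂ) - (Complex.normSq w₀ : ℂ)) = ((1 - Complex.normSq w₀ : ℝ) : ℂ) by push_cast; ring,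
      Complex.norm_real, Real.norm_eq_abs, abs_of_pos]
    · rw [Complex.sq_norm]
    · rw [← Complex.sq_norm]; nlinarith [norm_nonneg w₀]
  have e2 : ‖(1:ℂ) - (Complex.normSq a : ℂ)‖ = 1 - ‖a‖ ^ 2 := by
    rw [show ((1:ℂ) - (Complex.normSq a : ℂ)) = ((1 - Complex.normSq a : ℝ) : ℂ) by push_cast; ring,
      Complex.norm_real, Real.norm_eq_abs, abs_of_pos]
    · rw [Complex.sq_norm]
    · rw [← Complex.sq_norm]; nlinarith [norm_nonneg a]
  rw [e1, e2] at hschwarz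
  have hk1 : 0 < 1 - ‖w₀‖ ^ 2 := by nlinarith [norm_nonneg w₀]
  rw [inv_mul_le_iff₀ hk1] at hschwarz
  simpa using hschwarz

theorem stmt_11 (f g ψ φ : ℂ → ℂ) (r₁ : ℝ)
    (hf : DifferentiableOn ℂ f (Metric.ball (0 : ℂ) 1))
    (hg : DifferentiableOn ℂ g (Metric.ball (0 : ℂ) 1))
    (hf0 : f 0 = 0) (hg0 : g 0 = 0)
    (hf'0 : deriv f 0 = 1) (hg'0 : deriv g 0 = 1)
    (hψ : DifferentiableOn ℂ ψ (Metric.ball (0 : ℂ) 1))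
    (hψb : ∀ z ∈ Metric.ball (0 : ℂ) 1, ‖ψ z‖ ≤ 1)
    (hmaj : ∀ z ∈ Metric.ball (0 : ℂ) 1, f z = ψ z * g z)
    (hφ : DifferentiableOn ℂ φ (Metric.ball (0 : ℂ) 1))
    (hφ0 : φ 0 = 0)
    (hφb : ∀ z ∈ Metric.ball (0 : ℂ) 1, ‖φ z‖ < 1)
    (hsub : ∀ z ∈ Metric.ball (0 : ℂ) 1, z * deriv g z = g z * Complex.cos (φ z))
    (hr₁pos : 0 < r₁)
    (hr₁root : (1 - r₁ ^ 2) * Real.cos r₁ - 2 * r₁ = 0)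
    (hr₁min : ∀ r : ℝ, 0 < r → (1 - r ^ 2) * Real.cos r - 2 * r = 0 → r₁ ≤ r) :
    ∀ z : ℂ, ‖z‖ ≤ r₁ →
      ‖deriv f z‖ ≤ ‖deriv g z‖ := by
  intro z hz
  set F : ℝ → ℝ := fun r => (1 - r ^ 2) * Real.cos r - 2 * r with hF
  have hFc : Continuous F := by fun_prop
  have hF0 : F 0 = 1 := by simp [hF]
  have hr₁lt : r₁ < 1 / 2 := by
    by_contra hcon
    push_neg at hcon
    have hhalf : F (1 / 2) < 0 := by
      have h1 := Real.cos_le_one (1 / 2 : ℝ)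
      simp only [hF]; nlinarith
    obtain ⟨s, hs, hFs⟩ := intermediate_value_Icc' (by norm_num : (0:ℝ) ≤ 1/2)
      hFc.continuousOn ⟨hhalf.le, by rw [hF0]; norm_num⟩
    have hs0 : 0 < s := by
      rcases eq_or_lt_of_le hs.1 with h | h
      · exfalso; rw [← h, hF0] at hFs; norm_num at hFs
      · exact h
    have h1 := hr₁min s hs0 (by simpa [hF] using hFs)
    have hs2 : s = 1 / 2 := le_antisymm hs.2 (by linarith)
    rw [hs2] at hFs; linarith
  have hFpos : ∀ r : ℝ, 0 ≤ r → r ≤ r₁ → 0 ≤ F r := by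
    intro r h0r hrr
    by_contra hneg
    push_neg at hneg
    obtain ⟨s, hs, hFs⟩ := intermediate_value_Icc' h0r
      hFc.continuousOn ⟨hneg.le, by rw [hF0]; norm_num⟩
    have hs0 : 0 < s := by
      rcases eq_or_lt_of_le hs.1 with h | h
      · exfalso; rw [← h, hF0] at hFs; norm_num at hFs
      · exact h
    have h1 := hr₁min s hs0 (by simpa [hF] using hFs)
    have hs2 : s = r := le_antisymm hs.2 (by linarith)
    rw [hs2] at hFs; linarith
  set r := ‖z‖ with hr
  have hr0 : 0 ≤ r := norm_nonneg z
  have hrlt : r < 1 / 2 := lt_of_le_of_lt hz hr₁lt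
  have hzball : z ∈ Metric.ball (0 : ℂ) 1 := by
    rw [Metric.mem_ball, dist_zero_right]; linarith
  have hgat : DifferentiableAt ℂ g z := hg.differentiableAt (Metric.isOpen_ball.mem_nhds hzball)
  have hψat : DifferentiableAt ℂ ψ z := hψ.differentiableAt (Metric.isOpen_ball.mem_nhds hzball)
  have hfd : deriv f z = deriv ψ z * g z + ψ z * deriv g z := by
    have hev : f =ᶠ[nhds z] fun w => ψ w * g w :=
      Filter.eventuallyEq_of_mem (Metric.isOpen_ball.mem_nhds hzball) hmaj
    rw [hev.deriv_eq, deriv_fun_mul hψat hgat]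
  -- Schwarz for φ and the bound on |g|
  have hφmaps : Set.MapsTo φ (Metric.ball (0:ℂ) 1) (Metric.ball (0:ℂ) 1) := by
    intro w hw
    rw [Metric.mem_ball, dist_zero_right]
    exact hφb w hw
  have hφz : ‖φ z‖ ≤ r :=
    Complex.norm_le_norm_of_mapsTo_ball hφ (hφmaps.mono_right Metric.ball_subset_closedBall) hφ0 (by linarith)
  have hcos : Real.cos r ≤ ‖Complex.cos (φ z)‖ := cos_lb hφz (by linarith)
  have hcr : 0 < Real.cos r := by
    apply Real.cos_pos_of_mem_Ioo
    constructor <;> nlinarith [Real.pi_gt_three]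
  have hgineq : ‖g z‖ * Real.cos r ≤ r * ‖deriv g z‖ := by
    have hs := hsub z hzball
    have habs : r * ‖deriv g z‖
        = ‖g z‖ * ‖Complex.cos (φ z)‖ := by
      rw [← norm_mul, ← norm_mul, hs]
    rw [habs]
    exact mul_le_mul_of_nonneg_left hcos (norm_nonneg _)
  have h2r : 2 * r ≤ (1 - r ^ 2) * Real.cos r := by
    have := hFpos r hr0 hz
    simp only [hF] at this; linarith
  by_cases hA : ∃ a ∈ Metric.ball (0:ℂ) 1, ‖ψ a‖ = 1
  · obtain ⟨a, haball, ha1⟩ := hA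
    have hmax : IsMaxOn (norm ∘ ψ) (Metric.ball (0:ℂ) 1) a := by
      intro x hx
      simp only [Function.comp_apply, Set.mem_setOf_eq, ha1]
      exact hψb x hx
    have heq := Complex.eqOn_of_isPreconnected_of_isMaxOn_norm
      (convex_ball (0:ℂ) 1).isPreconnected Metric.isOpen_ball hψ haball hmax
    have hψd0 : deriv ψ z = 0 := by
      have hev : ψ =ᶠ[nhds z] fun _ => ψ a :=
        Filter.eventuallyEq_of_mem (Metric.isOpen_ball.mem_nhds hzball) heq
      rw [hev.deriv_eq, deriv_const]
    rw [hfd, hψd0, zero_mul, zero_add, norm_mul]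
    have := hψb z hzball
    nlinarith [norm_nonneg (deriv g z)]
  · push_neg at hA
    have hψlt : ∀ w ∈ Metric.ball (0:ℂ) 1, ‖ψ w‖ < 1 :=
      fun w hw => lt_of_le_of_ne (hψb w hw) (hA w hw)
    have hSP := schwarz_pick hψ hψlt hzball
    set A := ‖deriv ψ z‖ with hA'
    set k := ‖ψ z‖ with hk'
    set G := ‖g z‖ with hG'
    set D := ‖deriv g z‖ with hD'
    have htri : ‖deriv f z‖ ≤ A * G + k * D := by
      rw [hfd]
      calc ‖deriv ψ z * g z + ψ z * deriv g z‖
          ≤ ‖deriv ψ z * g z‖ + ‖ψ z * deriv g z‖ :=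
            norm_add_le _ _
        _ = A * G + k * D := by rw [norm_mul, norm_mul]
    have hk1 : k < 1 := hψlt z hzball
    have hk0 : 0 ≤ k := norm_nonneg _
    have hA0 : 0 ≤ A := norm_nonneg _
    have hG0 : 0 ≤ G := norm_nonneg _
    have hD0 : 0 ≤ D := norm_nonneg _
    -- hSP : A * (1 - r ^ 2) ≤ 1 - k ^ 2
    have h1 : (A * (1 - r ^ 2)) * (G * Real.cos r) ≤ (1 - k ^ 2) * (r * D) :=
      mul_le_mul hSP hgineq (by positivity) (by nlinarith [hk0, hk1])
    have h1kD : (0:ℝ) ≤ (1 - k) * D := mul_nonneg (by linarith) hD0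
    have h2 : ((1 - k) * D) * (2 * r) ≤ ((1 - k) * D) * ((1 - r ^ 2) * Real.cos r) :=
      mul_le_mul_of_nonneg_left h2r h1kD
    have h2b : ((1 - k) * D) * ((1 + k) * r) ≤ ((1 - k) * D) * (2 * r) :=
      mul_le_mul_of_nonneg_left (mul_le_mul_of_nonneg_right (by linarith : 1 + k ≤ 2) hr0) h1kD
    have hpos : 0 < (1 - r ^ 2) * Real.cos r := mul_pos (by nlinarith) hcr
    have h3 : A * G * ((1 - r ^ 2) * Real.cos r) ≤ ((1 - k) * D) * ((1 - r ^ 2) * Real.cos r) := by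
      calc A * G * ((1 - r ^ 2) * Real.cos r) = (A * (1 - r ^ 2)) * (G * Real.cos r) := by ring
        _ ≤ (1 - k ^ 2) * (r * D) := h1
        _ = ((1 - k) * D) * ((1 + k) * r) := by ring
        _ ≤ ((1 - k) * D) * (2 * r) := h2b
        _ ≤ ((1 - k) * D) * ((1 - r ^ 2) * Real.cos r) := h2
    have h4 : A * G ≤ (1 - k) * D := le_of_mul_le_mul_right (by linarith) hpos
    calc ‖deriv f z‖ ≤ A * G + k * D := htri
      _ ≤ (1 - k) * D + k * D := by linarith
      _ = D := by ring
end
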